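/- arXiv:1708.08164 — 2 statements merged into one kernel-verified Lean document; each statement's English description precedes it below -/
import Mathlib

section
/- Every ideal of ℤ[i] coprime to the ideal (1+i) has a unique generator congruent to 1 modulo (1+i)³. -/
/-!
Modulo `(1+i)³` there are exactly four residue classes prime to `1+i`, and the units
`1, -1, i, -i` of `ℤ[i]` represent all of them. Hence a generator `g` of an ideal prime to `1+i`
has an associate `u * g ≡ 1`. If two associates `c` and `c * v` are both `≡ 1`, then `c` is
invertible modulo `(1+i)³`, so `v ≡ 1`; and `1` is the only unit of `ℤ[i]` that is `≡ 1`.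
-/

theorem dvd_sub_one_of_dvd_mul_sub_one {R : Type*} [CommRing R] {m c u : R}
    (hc : m ∣ c - 1) (hcu : m ∣ c * u - 1) : m ∣ u - 1 := by
  have hcop : IsCoprime m c := by
    obtain ⟨k, hk⟩ := hc
    exact ⟨-k, 1, by linear_combination hk⟩
  exact hcop.dvd_of_dvd_mul_left (by simpa [mul_sub] using dvd_sub hcu hc)

namespace GaussianInt

theorem one_add_i_dvd_iff (z : GaussianInt) :
    (⟨1, 1⟩ : GaussianInt) ∣ z ↔ 2 ∣ z.re + z.im := by
  constructor
  · rintro ⟨w, rfl⟩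
    exact ⟨w.re, by simp; ring⟩
  · rintro ⟨a, ha⟩
    exact ⟨⟨a, z.im - a⟩, by ext <;> simp; linarith⟩

theorem one_add_i_pow_three_dvd_iff (z : GaussianInt) :
    (⟨1, 1⟩ : GaussianInt) ^ 3 ∣ z ↔ 4 ∣ z.re + z.im ∧ 4 ∣ z.im - z.re := by
  rw [show (⟨1, 1⟩ : GaussianInt) ^ 3 = ⟨-2, 2⟩ by decide]
  constructor
  · rintro ⟨w, rfl⟩
    exact ⟨⟨-w.im, by simp; ring⟩, ⟨w.re, by simp; ring⟩⟩
  · rintro ⟨⟨a, ha⟩, ⟨b, hb⟩⟩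
    exact ⟨⟨b, -a⟩, by ext <;> simp <;> linarith⟩

theorem not_isUnit_one_add_i : ¬ IsUnit (⟨1, 1⟩ : GaussianInt) := by
  rw [← Zsqrtd.norm_eq_one_iff' (by norm_num)]
  decide

theorem eq_one_of_isUnit_of_one_add_i_pow_three_dvd {u : GaussianInt} (hu : IsUnit u)
    (h : (⟨1, 1⟩ : GaussianInt) ^ 3 ∣ u - 1) : u = 1 := by
  have hnorm : u.re * u.re + u.im * u.im = 1 := by
    simpa [Zsqrtd.norm] using (Zsqrtd.norm_eq_one_iff' (by norm_num) u).mpr hu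
  rw [one_add_i_pow_three_dvd_iff] at h
  simp only [Zsqrtd.re_sub, Zsqrtd.im_sub, Zsqrtd.re_one, Zsqrtd.im_one, sub_zero] at h
  have : -1 ≤ u.re ∧ u.re ≤ 1 := by constructor <;> nlinarith
  have : -1 ≤ u.im ∧ u.im ≤ 1 := by constructor <;> nlinarith
  ext <;> simp <;> omega

theorem exists_isUnit_one_add_i_pow_three_dvd_mul_sub_one {g : GaussianInt}
    (hg : ¬ (⟨1, 1⟩ : GaussianInt) ∣ g) :
    ∃ u : GaussianInt, IsUnit u ∧ (⟨1, 1⟩ : GaussianInt) ^ 3 ∣ u * g - 1 := by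
  rw [one_add_i_dvd_iff] at hg
  simp only [one_add_i_pow_three_dvd_iff, Zsqrtd.re_sub, Zsqrtd.im_sub, Zsqrtd.re_mul,
    Zsqrtd.im_mul, Zsqrtd.re_one, Zsqrtd.im_one]
  have isUnit_of_norm {u : GaussianInt} (hu : u.norm = 1) : IsUnit u :=
    (Zsqrtd.norm_eq_one_iff' (by norm_num) u).mp hu
  rcases (by omega : (4 ∣ g.re + g.im - 1 ∧ 4 ∣ g.im - g.re + 1) ∨
      (4 ∣ g.re + g.im + 1 ∧ 4 ∣ g.im - g.re - 1) ∨
      (4 ∣ g.re - g.im - 1 ∧ 4 ∣ g.re + g.im + 1) ∨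
      (4 ∣ g.im - g.re - 1 ∧ 4 ∣ g.re + g.im - 1)) with h | h | h | h
  · exact ⟨1, isUnit_one, by simp; omega⟩
  · exact ⟨-1, isUnit_one.neg, by simp; omega⟩
  · exact ⟨⟨0, 1⟩, isUnit_of_norm (by decide), by simp; omega⟩
  · exact ⟨⟨0, -1⟩, isUnit_of_norm (by decide), by simp; omega⟩

end GaussianInt

/-- Every ideal of `ℤ[i]` coprime to the ideal `(1+i)` has a unique generator
congruent to `1` modulo `(1+i)³` (a "primary" generator). -/
theorem exists_unique_primary_generator (I : Ideal GaussianInt)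
    (h : I ⊔ Ideal.span {(⟨1, 1⟩ : GaussianInt)} = ⊤) :
    ∃! c : GaussianInt, I = Ideal.span {c} ∧ (⟨1, 1⟩ : GaussianInt) ^ 3 ∣ c - 1 := by
  obtain ⟨g, rfl⟩ := (IsPrincipalIdealRing.principal I).principal
  have hg : ¬ (⟨1, 1⟩ : GaussianInt) ∣ g := fun hdvd =>
    GaussianInt.not_isUnit_one_add_i (((Ideal.isCoprime_span_singleton_iff _ _).mp
      (Ideal.isCoprime_iff_sup_eq.mpr h)).isUnit_of_dvd' hdvd dvd_rfl)
  obtain ⟨u, hu, hug⟩ := GaussianInt.exists_isUnit_one_add_i_pow_three_dvd_mul_sub_one hg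
  refine ⟨u * g, ⟨(Ideal.span_singleton_mul_left_unit hu g).symm, hug⟩, ?_⟩
  rintro c ⟨hc, hc1⟩
  obtain ⟨v, rfl⟩ : Associated (u * g) c := by
    rw [← Ideal.span_singleton_eq_span_singleton, Ideal.span_singleton_mul_left_unit hu, ← hc]
  rw [GaussianInt.eq_one_of_isUnit_of_one_add_i_pow_three_dvd v.isUnit
    (dvd_sub_one_of_dvd_mul_sub_one hug hc1), mul_one]
end

section
/- Every ideal of ℤ[ω] coprime to the ideal (1−ω) has a unique generator congruent to 1 modulo 3. -/
/-!
ℤ[ω] is norm-Euclidean (every complex number lies at distance `< 1` from the lattice ℤ[ω]), hence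
a PID, so `I = (a)`; coprimality means `λ = 1 - ω` does not divide `a`. Since `λ² = -3ω`,
congruence modulo 3 is congruence modulo `λ²`, and `ℤ[ω]/(λ) = 𝔽₃`: writing `±a = 1 + λy` and
reducing `y` modulo `λ` shows that one of `±a, ±ωa, ±ω²a` is `≡ 1 mod 3`. Two such generators
differ by a unit `u ≡ 1 mod 3`, and `|u - 1| ≤ 2 < 3` forces `u = 1`.
-/

noncomputable section

open Complex

/-- The primitive cube root of unity `ω = exp(2πi/3)`. -/
def ω : ℂ := Complex.exp (2 * Real.pi * Complex.I / 3)

/-- The ring of Eisenstein integers `ℤ[ω]`, as a subring of `ℂ`. -/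
def Eis : Subring ℂ := Subring.closure {ω}

/-- `ω` as an element of `ℤ[ω]`. -/
def ωE : Eis := ⟨ω, Subring.subset_closure rfl⟩

namespace Eis

lemma ω_eq_exp_ofReal_mul_I : ω = exp ((2 * Real.pi / 3 : ℝ) * I) := by
  unfold ω; congr 1; push_cast; ring

lemma ω_re : ω.re = -(1 / 2) := by
  rw [ω_eq_exp_ofReal_mul_I, exp_ofReal_mul_I_re,
    show 2 * Real.pi / 3 = Real.pi - Real.pi / 3 by ring, Real.cos_pi_sub, Real.cos_pi_div_three]

lemma ω_im : ω.im = √3 / 2 := by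
  rw [ω_eq_exp_ofReal_mul_I, exp_ofReal_mul_I_im,
    show 2 * Real.pi / 3 = Real.pi - Real.pi / 3 by ring, Real.sin_pi_sub, Real.sin_pi_div_three]

lemma ω_sq_add_ω_add_one : ω ^ 2 + ω + 1 = 0 := by
  have h3 : √3 ^ 2 = 3 := Real.sq_sqrt (by norm_num)
  apply Complex.ext
  · simp [pow_two, ω_re, ω_im]; nlinarith
  · simp [pow_two, ω_re, ω_im]; ring

@[simp] lemma coe_ωE : ((ωE : Eis) : ℂ) = ω := rfl

lemma ωE_sq_add_ωE_add_one : ωE ^ 2 + ωE + 1 = 0 :=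
  Subtype.ext (by simpa using ω_sq_add_ω_add_one)

lemma isUnit_ωE : IsUnit ωE :=
  .of_mul_eq_one (-ωE - 1) (by linear_combination -ωE_sq_add_ωE_add_one)

lemma exists_eq_intCast_add_intCast_mul_ωE (x : Eis) : ∃ m n : ℤ, x = m + n * ωE := by
  suffices ∀ z ∈ Eis, ∃ m n : ℤ, z = m + n * ω by
    obtain ⟨m, n, h⟩ := this x x.2
    exact ⟨m, n, Subtype.ext (by simpa using h)⟩
  intro z hz
  induction hz using Subring.closure_induction with
  | mem z hz => exact ⟨0, 1, by simp [Set.mem_singleton_iff.1 hz]⟩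
  | zero => exact ⟨0, 0, by simp⟩
  | one => exact ⟨1, 0, by simp⟩
  | add _ _ _ _ h₁ h₂ =>
    obtain ⟨⟨m, n, rfl⟩, ⟨p, q, rfl⟩⟩ := And.intro h₁ h₂
    exact ⟨m + p, n + q, by push_cast; ring⟩
  | neg _ _ h =>
    obtain ⟨m, n, rfl⟩ := h
    exact ⟨-m, -n, by push_cast; ring⟩
  | mul _ _ _ _ h₁ h₂ =>
    obtain ⟨⟨m, n, rfl⟩, ⟨p, q, rfl⟩⟩ := And.intro h₁ h₂
    exact ⟨m * p - n * q, m * q + n * p - n * q,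
      by push_cast; linear_combination n * q * ω_sq_add_ω_add_one⟩

lemma normSq_intCast_add_intCast_mul_ω (m n : ℤ) :
    normSq (m + n * ω) = ((m ^ 2 - m * n + n ^ 2 : ℤ) : ℝ) := by
  have h3 : √3 ^ 2 = 3 := Real.sq_sqrt (by norm_num)
  simp [normSq_apply, ω_re, ω_im]
  nlinarith

lemma exists_normSq_eq_natCast (x : Eis) : ∃ k : ℕ, normSq (x : ℂ) = k := by
  obtain ⟨m, n, rfl⟩ := exists_eq_intCast_add_intCast_mul_ωE x
  refine ⟨(m ^ 2 - m * n + n ^ 2).toNat, ?_⟩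
  have : 0 ≤ m ^ 2 - m * n + n ^ 2 := by nlinarith [sq_nonneg (m - n)]
  push_cast [coe_ωE]
  rw [normSq_intCast_add_intCast_mul_ω]
  exact_mod_cast (Int.toNat_of_nonneg this).symm

lemma one_le_normSq {x : Eis} (hx : x ≠ 0) : 1 ≤ normSq (x : ℂ) := by
  obtain ⟨k, hk⟩ := exists_normSq_eq_natCast x
  have : k ≠ 0 := by
    rintro rfl
    exact hx (Subtype.ext (normSq_eq_zero.1 (by simpa using hk)))
  rw [hk]; exact_mod_cast Nat.one_le_iff_ne_zero.2 this

lemma exists_normSq_sub_lt_one (z : ℂ) : ∃ q : Eis, normSq (z - q) < 1 := by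
  have h3 : √3 ^ 2 = 3 := Real.sq_sqrt (by norm_num)
  have h3pos : 0 < √3 := by positivity
  set n : ℤ := round (z.im * 2 / √3)
  set m : ℤ := round (z.re + n / 2)
  refine ⟨m + n * ωE, ?_⟩
  have hre : (z - ↑((m : Eis) + n * ωE)).re = (z.re + n / 2) - m := by
    simp [ω_re, ω_im]; ring
  have him : (z - ↑((m : Eis) + n * ωE)).im = (z.im * 2 / √3 - n) * (√3 / 2) := by
    simp [ω_re, ω_im]; field_simp
  have b1 : |(z.re + n / 2) - m| ≤ 1 / 2 := abs_sub_round _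
  have b2 : |z.im * 2 / √3 - n| ≤ 1 / 2 := abs_sub_round _
  have s1 := pow_le_pow_left₀ (abs_nonneg _) b1 2
  have s2 := pow_le_pow_left₀ (abs_nonneg _) b2 2
  rw [sq_abs] at s1 s2
  rw [normSq_apply, hre, him]
  nlinarith

lemma exists_normSq_sub_mul_lt (b : Eis) {a : Eis} (ha : a ≠ 0) :
    ∃ q : Eis, normSq ((b - q * a : Eis) : ℂ) < normSq (a : ℂ) := by
  have ha' : (a : ℂ) ≠ 0 := by exact_mod_cast ha
  obtain ⟨q, hq⟩ := exists_normSq_sub_lt_one ((b : ℂ) / a)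
  refine ⟨q, ?_⟩
  have : ((b - q * a : Eis) : ℂ) = ((b : ℂ) / a - q) * a := by push_cast; field_simp
  rw [this, normSq_mul]
  exact mul_lt_of_lt_one_left (normSq_pos.2 ha') hq

instance : IsPrincipalIdealRing Eis where
  principal I := by
    classical
    by_cases hI : I = ⊥
    · exact hI ▸ bot_isPrincipal
    obtain ⟨x, hxI, hx0⟩ := Submodule.exists_mem_ne_zero_of_ne_bot hI
    have hex : ∃ k : ℕ, ∃ a ∈ I, a ≠ 0 ∧ normSq (a : ℂ) = k :=
      (exists_normSq_eq_natCast x).imp fun _ hk => ⟨x, hxI, hx0, hk⟩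
    obtain ⟨a, haI, ha0, ha⟩ := Nat.find_spec hex
    refine ⟨a, le_antisymm (fun b hb => ?_) ((Ideal.span_singleton_le_iff_mem I).2 haI)⟩
    obtain ⟨q, hq⟩ := exists_normSq_sub_mul_lt b ha0
    suffices b - q * a = 0 from Ideal.mem_span_singleton'.2 ⟨q, (sub_eq_zero.1 this).symm⟩
    by_contra hr
    obtain ⟨j, hj⟩ := exists_normSq_eq_natCast (b - q * a)
    refine Nat.find_min hex (m := j) ?_ ⟨_, I.sub_mem hb (I.mul_mem_left q haI), hr, hj⟩
    exact_mod_cast hj ▸ ha ▸ hq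

lemma normSq_eq_one_of_isUnit {u : Eis} (hu : IsUnit u) : normSq (u : ℂ) = 1 := by
  obtain ⟨v, huv⟩ := hu.exists_right_inv
  have hmul : normSq (u : ℂ) * normSq (v : ℂ) = 1 := by
    rw [← normSq_mul, ← Subring.coe_mul, huv]; simp
  have hu1 := one_le_normSq hu.ne_zero
  have hv1 := one_le_normSq (right_ne_zero_of_mul_eq_one huv)
  nlinarith

lemma eq_one_of_isUnit_of_three_dvd_sub_one {u : Eis} (hu : IsUnit u) (h3 : (3 : Eis) ∣ u - 1) :
    u = 1 := by
  obtain ⟨t, ht⟩ := h3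
  suffices t = 0 by rwa [this, mul_zero, sub_eq_zero] at ht
  by_contra ht0
  have hu1 : ‖(u : ℂ)‖ = 1 := by
    rw [← pow_eq_one_iff_of_nonneg (norm_nonneg _) two_ne_zero, ← normSq_eq_norm_sq,
      normSq_eq_one_of_isUnit hu]
  have ht1 : 1 ≤ ‖(t : ℂ)‖ ^ 2 := by rw [← normSq_eq_norm_sq]; exact one_le_normSq ht0
  have hut : (u : ℂ) - 1 = 3 * t := by
    simpa [show ((3 : Eis) : ℂ) = 3 from rfl] using congrArg Subtype.val ht
  have : 3 * ‖(t : ℂ)‖ ≤ 2 := by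
    simpa [hut, hu1, one_add_one_eq_two] using norm_sub_le (u : ℂ) 1
  nlinarith [norm_nonneg (t : ℂ)]

lemma not_isUnit_one_sub_ωE : ¬IsUnit (1 - ωE) := by
  intro hu
  have h := normSq_eq_one_of_isUnit hu
  rw [show ((1 - ωE : Eis) : ℂ) = ((1 : ℤ) : ℂ) + ((-1 : ℤ) : ℂ) * ω by push_cast [coe_ωE]; ring,
    normSq_intCast_add_intCast_mul_ω] at h
  norm_num at h

lemma one_sub_ωE_dvd_three : (1 - ωE) ∣ 3 :=
  ⟨2 + ωE, by linear_combination ωE_sq_add_ωE_add_one⟩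

lemma one_sub_ωE_dvd_or (x : Eis) : (1 - ωE) ∣ x ∨ (1 - ωE) ∣ x - 1 ∨ (1 - ωE) ∣ x + 1 := by
  obtain ⟨m, n, rfl⟩ := exists_eq_intCast_add_intCast_mul_ωE x
  obtain ⟨q, r, hr, hmn⟩ : ∃ q r : ℤ, (r = 0 ∨ r = 1 ∨ r = -1) ∧ m + n = 3 * q + r :=
    ⟨(m + n + 1) / 3, m + n - 3 * ((m + n + 1) / 3), by omega, by ring⟩
  have hmnE : (m + n : Eis) = 3 * q + r := by exact_mod_cast congrArg (Int.cast : ℤ → Eis) hmn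
  have hr' : (1 - ωE) ∣ m + n * ωE - r :=
    (dvd_add (dvd_mul_right _ (-n : Eis)) (one_sub_ωE_dvd_three.mul_right q)).trans
      (dvd_of_eq (by linear_combination -hmnE))
  rcases hr with rfl | rfl | rfl
  · left; simpa using hr'
  · right; left; simpa using hr'
  · right; right; simpa using hr'

lemma exists_isUnit_three_dvd_mul_sub_one_of_dvd_sub_one {x : Eis} (hx : (1 - ωE) ∣ x - 1) :
    ∃ u : Eis, IsUnit u ∧ (3 : Eis) ∣ u * x - 1 := by
  obtain ⟨y, hy⟩ := hx
  have h := ωE_sq_add_ωE_add_one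
  -- With `λ = 1 - ω`: `y ≡ 0, 1, -1 mod λ`, and `ω ≡ 1 - λ`, `ω² ≡ 1 + λ mod λ² = (3)` cancel
  -- the `λ`-term of `x = 1 + λy`.
  rcases one_sub_ωE_dvd_or y with ⟨z, hz⟩ | ⟨z, hz⟩ | ⟨z, hz⟩
  · exact ⟨1, isUnit_one, -ωE * z, by linear_combination hy + (1 - ωE) * hz + z * h⟩
  · exact ⟨ωE, isUnit_ωE, ωE - ωE ^ 2 * z,
      by linear_combination ωE * hy + ωE * (1 - ωE) * hz + (ωE * z - 1) * h⟩
  · exact ⟨ωE ^ 2, isUnit_ωE.pow 2, -z, by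
      linear_combination ωE ^ 2 * hy + ωE ^ 2 * (1 - ωE) * hz +
        (ωE - 1 + (ωE ^ 2 - 3 * ωE + 3) * z) * h⟩

lemma exists_isUnit_three_dvd_mul_sub_one {x : Eis} (hx : ¬(1 - ωE) ∣ x) :
    ∃ u : Eis, IsUnit u ∧ (3 : Eis) ∣ u * x - 1 := by
  rcases one_sub_ωE_dvd_or x with h | h | h
  · exact absurd h hx
  · exact exists_isUnit_three_dvd_mul_sub_one_of_dvd_sub_one h
  · obtain ⟨u, hu, h3⟩ :=
      exists_isUnit_three_dvd_mul_sub_one_of_dvd_sub_one (x := -x)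
        (by rw [← neg_add']; exact h.neg_right)
    exact ⟨-u, hu.neg, by simpa using h3⟩

end Eis

/-- Every ideal of `ℤ[ω]` coprime to the ideal `(1−ω)` has a unique generator
congruent to `1` modulo `3` (a "primary" generator). -/
theorem eisenstein_exists_unique_primary_generator (I : Ideal Eis)
    (h : I ⊔ Ideal.span {1 - ωE} = ⊤) :
    ∃! c : Eis, I = Ideal.span {c} ∧ (3 : Eis) ∣ c - 1 := by
  obtain ⟨a, rfl⟩ := IsPrincipalIdealRing.principal I
  have ha : ¬(1 - ωE) ∣ a := fun hdvd => Eis.not_isUnit_one_sub_ωE <| by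
    rw [← Ideal.span_singleton_eq_top, eq_top_iff, ← h]
    exact sup_le (Ideal.span_singleton_le_span_singleton.2 hdvd) le_rfl
  obtain ⟨u, hu, hua⟩ := Eis.exists_isUnit_three_dvd_mul_sub_one ha
  have hspan : Ideal.span {u * a} = Ideal.span {a} := Ideal.span_singleton_mul_left_unit hu a
  refine ⟨u * a, ⟨hspan.symm, hua⟩, ?_⟩
  rintro c ⟨hc, hc1⟩
  obtain ⟨v, rfl⟩ := Ideal.span_singleton_eq_span_singleton.1 (hspan.trans hc)
  have hv : (3 : Eis) ∣ (v : Eis) - 1 :=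
    (dvd_sub hc1 (hua.mul_right v)).trans (dvd_of_eq (by ring))
  rw [Eis.eq_one_of_isUnit_of_three_dvd_sub_one v.isUnit hv, mul_one]
end
end
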